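/- For every n ≥ 1, the taxi walk connective constant satisfies μ_taxi ≤ (c_{n+1}/2)^{1/n}; equivalently, 2·μ_taxi^n ≤ c_{n+1}. -/

import Mathlib

open Filter

/-- The oriented step relation of the Manhattan lattice. -/
def taxiStep (u v : ℤ × ℤ) : Prop :=
  (Even u.2 ∧ v = (u.1 + 1, u.2)) ∨
  (Odd u.2 ∧ v = (u.1 - 1, u.2)) ∨
  (Even u.1 ∧ v = (u.1, u.2 + 1)) ∨
  (Odd u.1 ∧ v = (u.1, u.2 - 1))

/-- Perpendicularity of two step vectors. -/
def perp (d e : ℤ × ℤ) : Prop := d.1 * e.1 + d.2 * e.2 = 0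

instance (d e : ℤ × ℤ) : Decidable (perp d e) := by unfold perp; infer_instance

/-- The walk `l` turns at its `i`-th vertex (meaningful for `1 ≤ i ≤ l.length - 2`). -/
def turnAt (l : List (ℤ × ℤ)) (i : ℕ) : Prop :=
  perp (l.getD i 0 - l.getD (i - 1) 0) (l.getD (i + 1) 0 - l.getD i 0)

instance (l : List (ℤ × ℤ)) (i : ℕ) : Decidable (turnAt l i) := by
  unfold turnAt; infer_instance

/-- A taxi walk, recorded as its list of vertices (a walk of length `n` has `n + 1` vertices). -/
def IsTaxiWalk (l : List (ℤ × ℤ)) : Prop :=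
  l ≠ [] ∧ l.Nodup ∧
  (∀ i, i + 1 < l.length → taxiStep (l.getD i 0) (l.getD (i + 1) 0)) ∧
  (∀ i, 1 ≤ i → i + 2 < l.length → ¬(turnAt l i ∧ turnAt l (i + 1)))

/-- The set of taxi walks of length `n` starting at the origin. -/
def originWalks (n : ℕ) : Set (List (ℤ × ℤ)) :=
  {l | IsTaxiWalk l ∧ l.length = n + 1 ∧ l.getD 0 0 = 0}

/-- `taxiCount n` is `c_n`, the number of taxi walks of length `n` starting at the origin. -/
noncomputable def taxiCount (n : ℕ) : ℕ := (originWalks n).ncard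

/-- The turn-word of a walk: `true` (the letter `t`) where the walk turns,
`false` (the letter `s`) where it goes straight. -/
def turnWord (l : List (ℤ × ℤ)) : List Bool :=
  (List.range (l.length - 2)).map fun i => decide (turnAt l (i + 1))

/-- The encoding of a taxi walk starting at the origin: the first coordinate is `true`
(for `N`) if `v₁ = (0,1)` and `false` (for `E`) if `v₁ = (1,0)`; the second is the turn-word. -/
def encode (l : List (ℤ × ℤ)) : Bool × List Bool :=
  (decide (l.getD 1 0 = (0, 1)), turnWord l)

/-- A bridge: a taxi walk from `(0,0)` to `(1,0)` staying at abscissa `≥ 1` after the start,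
whose last step is horizontal and ends at maximal abscissa. -/
def IsBridge (l : List (ℤ × ℤ)) : Prop :=
  IsTaxiWalk l ∧ 2 ≤ l.length ∧ l.getD 0 0 = (0, 0) ∧ l.getD 1 0 = (1, 0) ∧
  (∀ i, 1 ≤ i → i < l.length → 1 ≤ (l.getD i 0).1) ∧
  (l.getD (l.length - 1) 0).2 = (l.getD (l.length - 2) 0).2 ∧
  (∀ i, i < l.length → (l.getD i 0).1 ≤ (l.getD (l.length - 1) 0).1)

/-- `bridgeCount n` is `b_n`, the number of bridges of length `n`, with `b_0 = 1`. -/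
noncomputable def bridgeCount : ℕ → ℕ
  | 0 => 1
  | n + 1 => {l : List (ℤ × ℤ) | IsBridge l ∧ l.length = n + 2}.ncard

/-- The normalizing symmetry `f_{(x,y)}` of the oriented Manhattan lattice. -/
def normMap (p : ℤ × ℤ) (q : ℤ × ℤ) : ℤ × ℤ :=
  if Even p.1 then
    (if Even p.2 then (q.1 - p.1, q.2 - p.2) else (-(q.1 - p.1), q.2 - p.2))
  else
    (if Even p.2 then (q.1 - p.1, -(q.2 - p.2)) else (-(q.1 - p.1), -(q.2 - p.2)))

/-- The vertex `v_i` is a cutvertex of the bridge `l`. -/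
def IsCutAt (l : List (ℤ × ℤ)) (i : ℕ) : Prop :=
  0 < i ∧ i + 1 < l.length ∧
  IsBridge (l.take (i + 1)) ∧
  l.getD (i + 1) 0 = l.getD i 0 + (1, 0) ∧
  IsBridge ((l.drop i).map (normMap (l.getD i 0)))

/-- An irreducible bridge: a bridge with no cutvertex. -/
def IsIrreducibleBridge (l : List (ℤ × ℤ)) : Prop :=
  IsBridge l ∧ ∀ i, ¬ IsCutAt l i

/-- `irrBridgeCount n` is `a_n`, the number of irreducible bridges of length `n`, with `a_0 = 0`. -/
noncomputable def irrBridgeCount : ℕ → ℕ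
  | 0 => 0
  | n + 1 => {l : List (ℤ × ℤ) | IsIrreducibleBridge l ∧ l.length = n + 2}.ncard


/-!
A taxi walk from the origin is determined by its first step, east or north, and its turn-word,
and the reflection in the diagonal exchanges the two first steps while keeping the turn-word.
Hence `c (m + 1) = 2 e m`, where `e m` is the number of turn-words of length `m` that occur.
Cutting a walk at a vertex and moving the tail back to the origin by the lattice symmetry
`normMap` splits its turn-word, so `e` is submultiplicative. Thus `c (n m + 1) ≤ 2 (e n) ^ m`,
and taking `(n m + 1)`-th roots as `m → ∞` gives `μ ≤ (e n) ^ (1 / n) = (c (n + 1) / 2) ^ (1 / n)`.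
-/

lemma taxiStep.eq_of_perp_iff {u v w w' : ℤ × ℤ} (huv : taxiStep u v) (hvw : taxiStep v w)
    (hvw' : taxiStep v w') (hperp : perp (v - u) (w - v) ↔ perp (v - u) (w' - v)) :
    w = w' := by
  rcases huv with ⟨_, rfl⟩ | ⟨_, rfl⟩ | ⟨_, rfl⟩ | ⟨_, rfl⟩ <;>
  rcases hvw with ⟨_, rfl⟩ | ⟨_, rfl⟩ | ⟨_, rfl⟩ | ⟨_, rfl⟩ <;>
  rcases hvw' with ⟨_, rfl⟩ | ⟨_, rfl⟩ | ⟨_, rfl⟩ | ⟨_, rfl⟩ <;>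
  simp only [perp, Prod.ext_iff, Prod.fst_sub, Prod.snd_sub, Int.even_iff, Int.odd_iff] at * <;>
    omega

structure IsTaxiSymmetry (f : ℤ × ℤ → ℤ × ℤ) : Prop where
  injective : Function.Injective f
  map_step : ∀ {u v}, taxiStep u v → taxiStep (f u) (f v)
  perp_iff : ∀ a b c d, perp (f b - f a) (f d - f c) ↔ perp (b - a) (d - c)

lemma isTaxiSymmetry_swap : IsTaxiSymmetry Prod.swap where
  injective := Prod.swap_injective
  map_step := by
    rintro ⟨x, y⟩ v (⟨_, rfl⟩ | ⟨_, rfl⟩ | ⟨_, rfl⟩ | ⟨_, rfl⟩) <;> simp_all [taxiStep]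
  perp_iff _ _ _ _ := by simp only [perp, Prod.fst_sub, Prod.snd_sub, Prod.fst_swap,
    Prod.snd_swap, add_comm]

lemma isTaxiSymmetry_normMap (p : ℤ × ℤ) : IsTaxiSymmetry (normMap p) where
  injective q r h := by
    unfold normMap at h
    split_ifs at h <;> simp only [Prod.ext_iff] at * <;> omega
  map_step := by
    rintro u v (⟨hu, rfl⟩ | ⟨hu, rfl⟩ | ⟨hu, rfl⟩ | ⟨hu, rfl⟩) <;>
    · unfold taxiStep normMap
      split_ifs <;> simp only [Prod.ext_iff, Int.even_iff, Int.odd_iff, and_true, true_and] at * <;>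
        omega
  perp_iff _ _ _ _ := by
    unfold perp normMap
    split_ifs <;> simp only [Prod.fst_sub, Prod.snd_sub] <;> constructor <;> intro h <;>
      linear_combination h

lemma normMap_self (p : ℤ × ℤ) : normMap p p = 0 := by
  unfold normMap; split_ifs <;> simp [Prod.ext_iff]

section List

variable {α : Type*} (l : List α) (d : α)

lemma List.getD_drop (a i : ℕ) : (l.drop a).getD i d = l.getD (a + i) d := by
  simp only [List.getD_eq_getElem?_getD, List.getElem?_drop]

lemma List.getD_take_of_lt {k i : ℕ} (h : i < k) : (l.take k).getD i d = l.getD i d := by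
  simp only [List.getD_eq_getElem?_getD, List.getElem?_take, if_pos h]

lemma List.getD_map_of_lt {β : Type*} (f : α → β) (d' : β) {i : ℕ} (h : i < l.length) :
    (l.map f).getD i d' = f (l.getD i d) := by
  simp [h]

end List

lemma length_turnWord (l : List (ℤ × ℤ)) : (turnWord l).length = l.length - 2 := by
  simp [turnWord]

lemma getElem_turnWord {l : List (ℤ × ℤ)} {j : ℕ} (h : j < (turnWord l).length) :
    (turnWord l)[j] = decide (turnAt l (j + 1)) := by
  simp [turnWord]

lemma turnAt_iff_of_turnWord_eq {l l' : List (ℤ × ℤ)} (hw : turnWord l = turnWord l') {i : ℕ}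
    (hi : i + 2 < l.length) : turnAt l (i + 1) ↔ turnAt l' (i + 1) := by
  have hi' : i < (turnWord l).length := by rw [length_turnWord]; omega
  simpa [getElem_turnWord] using List.getElem_of_eq hw hi'

lemma turnAt_drop (l : List (ℤ × ℤ)) (a : ℕ) {i : ℕ} (hi : 1 ≤ i) :
    turnAt (l.drop a) i ↔ turnAt l (a + i) := by
  simp only [turnAt, List.getD_drop, show a + (i - 1) = a + i - 1 by omega, Nat.add_assoc]

lemma turnAt_take (l : List (ℤ × ℤ)) {k i : ℕ} (hi : i + 1 < k) :
    turnAt (l.take k) i ↔ turnAt l i := by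
  simp only [turnAt, List.getD_take_of_lt _ _ (show i < k by omega),
    List.getD_take_of_lt _ _ (show i - 1 < k by omega), List.getD_take_of_lt _ _ hi]

lemma turnWord_drop (l : List (ℤ × ℤ)) (a : ℕ) : turnWord (l.drop a) = (turnWord l).drop a := by
  refine List.ext_getElem (by simp [length_turnWord]; omega) fun j hj _ => ?_
  rw [getElem_turnWord, List.getElem_drop, getElem_turnWord, decide_eq_decide,
    turnAt_drop l a (by omega), Nat.add_assoc]

lemma turnWord_take (l : List (ℤ × ℤ)) (a : ℕ) :
    turnWord (l.take (a + 2)) = (turnWord l).take a := by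
  refine List.ext_getElem (by simp [length_turnWord]; omega) fun j hj _ => ?_
  simp only [List.length_take, length_turnWord] at hj
  rw [getElem_turnWord, List.getElem_take, getElem_turnWord, decide_eq_decide,
    turnAt_take l (by omega)]

lemma IsTaxiWalk.take {l : List (ℤ × ℤ)} (hl : IsTaxiWalk l) {k : ℕ} (hk : 0 < k) :
    IsTaxiWalk (l.take k) := by
  obtain ⟨hne, hnd, hstep, hturn⟩ := hl
  refine ⟨by simp [List.take_eq_nil_iff, hne, hk.ne'], hnd.sublist (List.take_sublist _ _),
    fun i hi => ?_, fun i h1 h2 => ?_⟩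
  · simp only [List.length_take] at hi
    rw [l.getD_take_of_lt _ (by omega), l.getD_take_of_lt _ (by omega)]
    exact hstep i (by omega)
  · simp only [List.length_take] at h2
    rw [turnAt_take l (by omega), turnAt_take l (by omega)]
    exact hturn i h1 (by omega)

lemma IsTaxiWalk.drop {l : List (ℤ × ℤ)} (hl : IsTaxiWalk l) {a : ℕ} (ha : a < l.length) :
    IsTaxiWalk (l.drop a) := by
  obtain ⟨-, hnd, hstep, hturn⟩ := hl
  refine ⟨by simp [List.drop_eq_nil_iff]; omega, hnd.sublist (List.drop_sublist _ _),
    fun i hi => ?_, fun i h1 h2 => ?_⟩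
  · simp only [List.length_drop] at hi
    rw [l.getD_drop, l.getD_drop, ← Nat.add_assoc]
    exact hstep (a + i) (by omega)
  · simp only [List.length_drop] at h2
    rw [turnAt_drop l a h1, turnAt_drop l a (by omega), ← Nat.add_assoc]
    exact hturn (a + i) (by omega) (by omega)

namespace IsTaxiSymmetry

variable {f : ℤ × ℤ → ℤ × ℤ} (hf : IsTaxiSymmetry f)
include hf

lemma turnAt_map {l : List (ℤ × ℤ)} {i : ℕ} (h1 : 1 ≤ i) (h2 : i + 1 < l.length) :
    turnAt (l.map f) i ↔ turnAt l i := by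
  simp only [turnAt, l.getD_map_of_lt 0 f 0 h2, l.getD_map_of_lt 0 f 0 (show i < l.length by omega),
    l.getD_map_of_lt 0 f 0 (show i - 1 < l.length by omega), hf.perp_iff]

lemma turnWord_map (l : List (ℤ × ℤ)) : turnWord (l.map f) = turnWord l := by
  refine List.ext_getElem (by simp [length_turnWord]) fun j hj _ => ?_
  simp only [List.length_map, length_turnWord] at hj
  rw [getElem_turnWord, getElem_turnWord, decide_eq_decide, hf.turnAt_map (by omega) (by omega)]

lemma isTaxiWalk_map {l : List (ℤ × ℤ)} (hl : IsTaxiWalk l) : IsTaxiWalk (l.map f) := by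
  obtain ⟨hne, hnd, hstep, hturn⟩ := hl
  refine ⟨by simpa using hne, hnd.map hf.injective, fun i hi => ?_, fun i h1 h2 => ?_⟩
  · simp only [List.length_map] at hi
    rw [l.getD_map_of_lt 0 f 0 hi, l.getD_map_of_lt 0 f 0 (by omega)]
    exact hf.map_step (hstep i hi)
  · simp only [List.length_map] at h2
    rw [hf.turnAt_map h1 (by omega), hf.turnAt_map (by omega) (by omega)]
    exact hturn i h1 h2

end IsTaxiSymmetry

lemma IsTaxiWalk.ext {l l' : List (ℤ × ℤ)} (hl : IsTaxiWalk l) (hl' : IsTaxiWalk l')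
    (hlen : l.length = l'.length) (h0 : l.getD 0 0 = l'.getD 0 0)
    (h1 : l.getD 1 0 = l'.getD 1 0) (hw : turnWord l = turnWord l') : l = l' := by
  have key : ∀ i, i + 1 < l.length →
      l.getD i 0 = l'.getD i 0 ∧ l.getD (i + 1) 0 = l'.getD (i + 1) 0 := by
    intro i
    induction i with
    | zero => exact fun _ => ⟨h0, h1⟩
    | succ i ih =>
      intro hi
      obtain ⟨e0, e1⟩ := ih (by omega)
      have hturn : turnAt l (i + 1) ↔ turnAt l' (i + 1) := turnAt_iff_of_turnWord_eq hw hi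
      have hstep' := hl'.2.2.1 (i + 1) (by omega)
      rw [← e1] at hstep'
      refine ⟨e1, (hl.2.2.1 i (by omega)).eq_of_perp_iff (hl.2.2.1 (i + 1) hi) hstep' ?_⟩
      simpa only [turnAt, Nat.add_sub_cancel, e0, e1] using hturn
  refine List.ext_getElem hlen fun i hi _ => ?_
  rw [← List.getD_eq_getElem _ 0, ← List.getD_eq_getElem _ 0]
  rcases i with _ | i
  · exact h0
  · exact (key i hi).2

lemma getD_one_of_mem_originWalks {k : ℕ} {l : List (ℤ × ℤ)} (hk : 1 ≤ k)
    (hl : l ∈ originWalks k) : l.getD 1 0 = (1, 0) ∨ l.getD 1 0 = (0, 1) := by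
  obtain ⟨⟨-, -, hstep, -⟩, hlen, h0⟩ := hl
  have h := hstep 0 (by omega)
  rw [h0] at h
  rcases h with ⟨-, h⟩ | ⟨h, -⟩ | ⟨-, h⟩ | ⟨h, -⟩
  · exact .inl h
  · exact absurd h (by decide)
  · exact .inr h
  · exact absurd h (by decide)

lemma map_swap_mem_originWalks {k : ℕ} {l : List (ℤ × ℤ)} (hl : l ∈ originWalks k) :
    l.map Prod.swap ∈ originWalks k := by
  obtain ⟨hw, hlen, h0⟩ := hl
  refine ⟨isTaxiSymmetry_swap.isTaxiWalk_map hw, by simpa, ?_⟩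
  rw [l.getD_map_of_lt 0 _ _ (by omega), h0, Prod.swap_zero]

lemma take_mem_originWalks {a b : ℕ} {l : List (ℤ × ℤ)} (hl : l ∈ originWalks (a + b + 1)) :
    l.take (a + 2) ∈ originWalks (a + 1) := by
  obtain ⟨hw, hlen, h0⟩ := hl
  exact ⟨hw.take (by omega), by simp; omega, by rw [l.getD_take_of_lt _ (by omega), h0]⟩

lemma map_normMap_drop_mem_originWalks {a b : ℕ} {l : List (ℤ × ℤ)}
    (hl : l ∈ originWalks (a + b + 1)) :
    (l.drop a).map (normMap (l.getD a 0)) ∈ originWalks (b + 1) := by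
  obtain ⟨hw, hlen, -⟩ := hl
  refine ⟨(isTaxiSymmetry_normMap _).isTaxiWalk_map (hw.drop (by omega)), by simp; omega, ?_⟩
  rw [List.getD_map_of_lt _ 0 _ _ (by simp; omega), List.getD_drop, Nat.add_zero, normMap_self]

/-- The turn-words of the walks of length `m + 1`; they have length `m`. -/
def turnWords (m : ℕ) : Set (List Bool) := turnWord '' originWalks (m + 1)

lemma turnWords_subset_length_eq (m : ℕ) : turnWords m ⊆ {w | w.length = m} := by
  rintro _ ⟨l, hl, rfl⟩
  simp [length_turnWord, hl.2.1]

lemma turnWords_finite (m : ℕ) : (turnWords m).Finite :=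
  (List.finite_length_eq Bool m).subset (turnWords_subset_length_eq m)

lemma encode_injOn {k : ℕ} (hk : 1 ≤ k) : Set.InjOn encode (originWalks k) := by
  intro l hl l' hl' he
  simp only [encode, Prod.mk.injEq, decide_eq_decide] at he
  have h1 : l.getD 1 0 = l'.getD 1 0 := by
    rcases getD_one_of_mem_originWalks hk hl with h | h <;>
    rcases getD_one_of_mem_originWalks hk hl' with h' | h' <;> simp_all
  exact hl.1.ext hl'.1 (by rw [hl.2.1, hl'.2.1]) (hl.2.2.trans hl'.2.2.symm) h1 he.2

/-- Reflecting in the diagonal exchanges the two possible first steps and keeps the turn-word. -/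
lemma image_encode_originWalks (m : ℕ) :
    encode '' originWalks (m + 1) = Set.univ ×ˢ turnWords m := by
  refine subset_antisymm (Set.image_subset_iff.2 fun l hl => ⟨trivial, l, hl, rfl⟩) ?_
  rintro ⟨b, _⟩ ⟨-, l, hl, rfl⟩
  by_cases hb : decide (l.getD 1 0 = (0, 1)) = b
  · exact ⟨l, hl, by rw [encode, hb]⟩
  refine ⟨l.map Prod.swap, map_swap_mem_originWalks hl, ?_⟩
  rw [encode, isTaxiSymmetry_swap.turnWord_map, l.getD_map_of_lt 0 _ _ (by rw [hl.2.1]; omega)]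
  rcases getD_one_of_mem_originWalks (by omega) hl with h | h <;> rw [h] at hb ⊢ <;>
    simp_all

lemma taxiCount_succ (m : ℕ) : taxiCount (m + 1) = 2 * (turnWords m).ncard := by
  rw [taxiCount, ← (encode_injOn (by omega)).ncard_image, image_encode_originWalks,
    Set.ncard_prod, Set.ncard_univ, Nat.card_eq_fintype_card, Fintype.card_bool]

/-- Cutting a walk at its `a`-th vertex splits its turn-word after the `a`-th letter. -/
lemma ncard_turnWords_add_le (a b : ℕ) :
    (turnWords (a + b)).ncard ≤ (turnWords a).ncard * (turnWords b).ncard := by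
  rw [← Set.ncard_prod]
  refine Set.ncard_le_ncard_of_injOn (fun w => (w.take a, w.drop a)) ?_ ?_
    ((turnWords_finite a).prod (turnWords_finite b))
  · rintro _ ⟨l, hl, rfl⟩
    refine ⟨⟨_, take_mem_originWalks hl, turnWord_take l a⟩,
      ⟨_, map_normMap_drop_mem_originWalks hl, ?_⟩⟩
    rw [(isTaxiSymmetry_normMap _).turnWord_map, turnWord_drop]
  · intro w _ w' _ h
    rw [Prod.mk.injEq] at h
    rw [← List.take_append_drop a w, ← List.take_append_drop a w', h.1, h.2]

lemma ncard_turnWords_mul_le (n m : ℕ) :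
    (turnWords (n * m)).ncard ≤ (turnWords n).ncard ^ m := by
  induction m with
  | zero =>
    refine (Set.ncard_le_ncard ?_ (Set.finite_singleton [])).trans_eq (Set.ncard_singleton _)
    simpa using turnWords_subset_length_eq 0
  | succ m ih =>
    rw [Nat.mul_succ, pow_succ]
    exact (ncard_turnWords_add_le _ _).trans (Nat.mul_le_mul_right _ ih)

lemma le_rpow_of_tendsto_of_le_mul_pow {u : ℕ → ℝ} {μ C D : ℝ} (hu : ∀ k, 0 ≤ u k)
    (hμ : Tendsto (fun k : ℕ => u k ^ ((1 : ℝ) / k)) atTop (nhds μ)) (hC : 0 < C) (hD : 0 ≤ D)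
    {n : ℕ} (hn : n ≠ 0) (hbound : ∀ m, u (n * m + 1) ≤ C * D ^ m) :
    μ ≤ D ^ ((1 : ℝ) / n) := by
  have hnm : Tendsto (fun m : ℕ => n * m) atTop atTop :=
    tendsto_atTop_mono (fun m => Nat.le_mul_of_pos_left m (by omega)) tendsto_id
  have hφ : Tendsto (fun m : ℕ => n * m + 1) atTop atTop :=
    tendsto_atTop_mono (fun m => Nat.le_succ _) hnm
  set e : ℕ → ℝ := fun m => 1 / ((n * m + 1 : ℕ) : ℝ) with he
  have he0 : Tendsto e atTop (nhds 0) := tendsto_one_div_atTop_nhds_zero_nat.comp hφ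
  have hme : Tendsto (fun m : ℕ => m * e m) atTop (nhds ((1 : ℝ) / n)) := by
    have h := ((tendsto_natCast_div_add_atTop (1 : ℝ)).comp hnm).const_mul ((1 : ℝ) / n)
    rw [mul_one] at h
    refine h.congr fun m => ?_
    have : (n : ℝ) ≠ 0 := by exact_mod_cast hn
    simp only [Function.comp_apply, he]
    push_cast
    field_simp
  have hCe : Tendsto (fun m => C ^ e m) atTop (nhds 1) := by
    rw [← Real.rpow_zero C]
    exact (Real.continuousAt_const_rpow hC.ne').tendsto.comp he0
  have hDe : Tendsto (fun m : ℕ => D ^ (m * e m)) atTop (nhds (D ^ ((1 : ℝ) / n))) :=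
    (Real.continuousAt_const_rpow' (by positivity)).tendsto.comp hme
  refine le_of_tendsto_of_tendsto' (hμ.comp hφ) (by simpa only [one_mul] using hCe.mul hDe)
    fun m => ?_
  calc u (n * m + 1) ^ e m ≤ (C * D ^ m) ^ e m :=
        Real.rpow_le_rpow (hu _) (hbound m) (by positivity)
    _ = C ^ e m * D ^ (m * e m) := by
        rw [Real.mul_rpow hC.le (by positivity), ← Real.rpow_natCast, ← Real.rpow_mul hD]

/-- For every `n ≥ 1`, the taxi walk connective constant satisfies
`μ_taxi ≤ (c_{n+1}/2)^{1/n}`; equivalently, `2·μ_taxi^n ≤ c_{n+1}`. -/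
theorem muTaxi_upper_bound_from_counts (μ : ℝ)
    (hμ : Filter.Tendsto (fun n : ℕ => (taxiCount n : ℝ) ^ ((1 : ℝ) / (n : ℝ)))
      Filter.atTop (nhds μ))
    (n : ℕ) (hn : 1 ≤ n) :
    μ ≤ ((taxiCount (n + 1) : ℝ) / 2) ^ ((1 : ℝ) / (n : ℝ)) ∧
      2 * μ ^ n ≤ (taxiCount (n + 1) : ℝ) := by
  have hcount : (taxiCount (n + 1) : ℝ) / 2 = (turnWords n).ncard := by
    rw [taxiCount_succ]; push_cast; ring
  have hbound (m : ℕ) : (taxiCount (n * m + 1) : ℝ) ≤ 2 * ((turnWords n).ncard : ℝ) ^ m := by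
    rw [taxiCount_succ]
    exact_mod_cast Nat.mul_le_mul_left 2 (ncard_turnWords_mul_le n m)
  have hle : μ ≤ ((turnWords n).ncard : ℝ) ^ ((1 : ℝ) / n) :=
    le_rpow_of_tendsto_of_le_mul_pow (fun k => Nat.cast_nonneg _) hμ two_pos (Nat.cast_nonneg _)
      (by omega) hbound
  have hpow := pow_le_pow_left₀ (ge_of_tendsto' hμ fun k => by positivity) hle n
  rw [one_div, Real.rpow_inv_natCast_pow (Nat.cast_nonneg _) (by omega)] at hpow
  rw [hcount]
  exact ⟨hle, by linarith⟩
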